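/- If r is a reflexive and ε-transitive fuzzy relation on X over a linear complete residuated lattice, then its ε-truncation r_ε is an ε-FPO on X, i.e., r_ε is reflexive, ε-transitive, and (r_ε)_ε = r_ε. -/

import Mathlib

/-- A linear and complete residuated lattice: a complete linear order carrying a
commutative monoid structure whose unit `1` is the greatest element, together with a
residuum satisfying the adjunction property. -/
class ResiduatedLattice (L : Type*) extends CompleteLinearOrder L, CommMonoid L where
  res : L → L → L
  adjunction : ∀ x y z : L, x * y ≤ z ↔ x ≤ res y z
  one_eq_top : (1 : L) = ⊤

variable {L : Type*} [ResiduatedLattice L]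

/-- `x ≤_ε y` iff `x ≤ y` or `x ≤ ε`. -/
def leE (ε x y : L) : Prop := x ≤ y ∨ x ≤ ε

/-- `x =_ε y` iff `x ≤_ε y` and `y ≤_ε x`. -/
def eqE (ε x y : L) : Prop := leE ε x y ∧ leE ε y x

/-- `x ⊗_ε y` is `x ⊗ y` if `x ⊗ y > ε`, and `ε` otherwise. -/
def mulE (ε x y : L) : L := if ε < x * y then x * y else ε

/-- `x →_ε y := (x ∨ ε) → (y ∨ ε)`. -/
def resE (ε x y : L) : L := ResiduatedLattice.res (x ⊔ ε) (y ⊔ ε)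

/-- Composition of fuzzy relations: `(r ∘ s)(a,b) = sup_c r(a,c) ⊗ s(c,b)`. -/
noncomputable def relComp {X : Type*} (r s : X → X → L) : X → X → L :=
  fun a b => ⨆ c, r a c * s c b

/-- `ε`-composition of fuzzy relations:
`(r ∘_ε s)(a,b) = ⋁_ε { r(a,c) ⊗_ε s(c,b) : c ∈ X }`. -/
noncomputable def relCompE {X : Type*} (ε : L) (r s : X → X → L) : X → X → L :=
  fun a b => (⨆ c, mulE ε (r a c) (s c b)) ⊔ ε

/-- The `ε`-truncation of a fuzzy relation. -/
def truncRel {X : Type*} (ε : L) (r : X → X → L) : X → X → L :=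
  fun a b => if ε < r a b then r a b else ε

/-- A fuzzy `ε`-pre-order (`ε`-FPO) on `X`: a fuzzy relation that is reflexive,
`ε`-transitive, and equal to its own `ε`-truncation. -/
def IsEFPO {X : Type*} (ε : L) (r : X → X → L) : Prop :=
  (∀ x, r x x = 1) ∧
  (∀ a b, leE ε (relCompE ε r r a b) (r a b)) ∧
  truncRel ε r = r

/-! In a linear lattice the ε-truncation of a value is its join with ε, and so is `⊗_ε` of the
product. Truncating the arguments of `⊗_ε` only adds products `x ⊗ ε`, `ε ⊗ y`, `ε ⊗ ε`, all
below ε, so `r_ε ∘_ε r_ε = r ∘_ε r`; ε-transitivity of `r` then transfers to `r_ε = r ⊔ ε`. -/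

namespace ResiduatedLattice

instance : MulLeftMono L where
  elim x y z (h : y ≤ z) := show x * y ≤ x * z by
    rw [mul_comm x y, mul_comm x z, adjunction]
    exact h.trans ((adjunction z x (z * x)).mp le_rfl)

theorem le_one (x : L) : x ≤ 1 := one_eq_top (L := L) ▸ le_top

theorem mul_le_left (x y : L) : x * y ≤ x := mul_le_of_le_one_right' (le_one y)

theorem mul_le_right (x y : L) : x * y ≤ y := mul_le_of_le_one_left' (le_one x)

theorem sup_mul_sup_sup (ε x y : L) : (x ⊔ ε) * (y ⊔ ε) ⊔ ε = x * y ⊔ ε := by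
  refine le_antisymm (sup_le ?_ le_sup_right)
    (sup_le_sup_right (mul_le_mul' le_sup_left le_sup_left) ε)
  rw [← max_mul_mul_right, ← max_mul_mul_left, ← max_mul_mul_left]
  exact sup_le (sup_le le_sup_left ((mul_le_right x ε).trans le_sup_right))
    (sup_le ((mul_le_left ε y).trans le_sup_right) ((mul_le_left ε ε).trans le_sup_right))

end ResiduatedLattice

open ResiduatedLattice

theorem ite_lt_eq_sup {α : Type*} [LinearOrder α] (ε x : α) :
    (if ε < x then x else ε) = x ⊔ ε :=
  (max_def_lt ε x).symm.trans (max_comm ε x)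

theorem mulE_eq_mul_sup (ε x y : L) : mulE ε x y = x * y ⊔ ε := ite_lt_eq_sup ε (x * y)

theorem truncRel_apply {X : Type*} (ε : L) (r : X → X → L) (a b : X) :
    truncRel ε r a b = r a b ⊔ ε := ite_lt_eq_sup ε (r a b)

theorem leE_iff_le_sup {ε x y : L} : leE ε x y ↔ x ≤ y ⊔ ε := le_sup_iff.symm

theorem leE_sup_right_iff {ε x y : L} : leE ε x (y ⊔ ε) ↔ leE ε x y := by
  rw [leE_iff_le_sup, leE_iff_le_sup, sup_assoc, sup_idem]

theorem mulE_sup_sup (ε x y : L) : mulE ε (x ⊔ ε) (y ⊔ ε) = mulE ε x y := by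
  rw [mulE_eq_mul_sup, mulE_eq_mul_sup, sup_mul_sup_sup]

theorem relCompE_truncRel {X : Type*} (ε : L) (r s : X → X → L) :
    relCompE ε (truncRel ε r) (truncRel ε s) = relCompE ε r s := by
  funext a b
  simp only [relCompE, truncRel_apply, mulE_sup_sup]

theorem truncRel_truncRel {X : Type*} (ε : L) (r : X → X → L) :
    truncRel ε (truncRel ε r) = truncRel ε r := by
  funext a b
  rw [truncRel_apply, truncRel_apply, sup_assoc, sup_idem]

theorem stmt_11 {X : Type*} (ε : L) (r : X → X → L)
    (hrefl : ∀ x, r x x = 1)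
    (htrans : ∀ a b, leE ε (relCompE ε r r a b) (r a b)) :
    IsEFPO ε (truncRel ε r) := by
  refine ⟨fun x => ?_, fun a b => ?_, truncRel_truncRel ε r⟩
  · rw [truncRel_apply, hrefl, sup_eq_left.mpr (le_one ε)]
  · rw [relCompE_truncRel, truncRel_apply, leE_sup_right_iff]
    exact htrans a b
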